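/- arXiv:2004.02520 — 3 statements merged into one kernel-verified Lean document; each statement's English description precedes it below -/
import Mathlib

section
/- In a graded (hence nilpotent) Lie group G endowed with a homogeneous distance ρ (left-invariant and 1-homogeneous with respect to the dilations δ_λ), the diameter of every open ball B_ρ(p,r) equals exactly 2r. -/
/-- In a graded group `G` endowed with a homogeneous distance (left-invariant and
1-homogeneous with respect to the dilations `δ`), the diameter of every open ball
`B(p, r)` equals exactly `2 * r`.  The first layer `V₁` of the grading satisfies
`v * v = δ 2 v` for `v ∈ V₁`, is dilation-invariant and nontrivial. -/
theorem diam_ball_eq_two_mul_radius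
    {G : Type*} [Group G] [MetricSpace G]
    (δ : ℝ → G → G)
    (hδ_one : ∀ lam : ℝ, δ lam (1 : G) = 1)
    (hleft : ∀ g x y : G, dist (g * x) (g * y) = dist x y)
    (hhom : ∀ lam : ℝ, 0 < lam → ∀ x y : G, dist (δ lam x) (δ lam y) = lam * dist x y)
    (V₁ : Set G)
    (hV₁dil : ∀ lam : ℝ, 0 < lam → ∀ v ∈ V₁, δ lam v ∈ V₁)
    (hV₁sq : ∀ v ∈ V₁, v * v = δ 2 v)
    (hV₁ne : ∃ v ∈ V₁, v ≠ 1)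
    (p : G) (r : ℝ) (hr : 0 < r) :
    Metric.diam (Metric.ball p r) = 2 * r := by
  obtain ⟨v, hv, hvne⟩ := hV₁ne
  set d := dist (1 : G) v with hd
  have hdpos : 0 < d := by
    rw [hd, dist_pos]; exact fun h => hvne h.symm
  -- distance from 1 to δ t v is t * d
  have hdist1 : ∀ t : ℝ, 0 < t → dist (1 : G) (δ t v) = t * d := by
    intro t ht
    calc dist (1 : G) (δ t v) = dist (δ t 1) (δ t v) := by rw [hδ_one]
      _ = t * d := hhom t ht 1 v
  -- key: dist (δ t v) (δ t v)⁻¹ = 2 * (t * d)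
  have hkey : ∀ t : ℝ, 0 < t → dist (δ t v) (δ t v)⁻¹ = 2 * (t * d) := by
    intro t ht
    set w := δ t v with hw
    have hwV : w ∈ V₁ := hV₁dil t ht v hv
    calc dist w w⁻¹ = dist (w * w) (w * w⁻¹) := (hleft w w w⁻¹).symm
      _ = dist (δ 2 w) 1 := by rw [hV₁sq w hwV, mul_inv_cancel]
      _ = dist (δ 2 w) (δ 2 1) := by rw [hδ_one]
      _ = 2 * dist w 1 := hhom 2 two_pos w 1
      _ = 2 * (t * d) := by rw [dist_comm, hw, hdist1 t ht]
  apply le_antisymm (Metric.diam_ball hr.le)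
  -- show 2 * r ≤ diam
  have hbd : Bornology.IsBounded (Metric.ball p r) := Metric.isBounded_ball
  have hlower : ∀ s : ℝ, 0 < s → s < r → 2 * s ≤ Metric.diam (Metric.ball p r) := by
    intro s hs hsr
    set t := s / d with ht
    have htpos : 0 < t := div_pos hs hdpos
    have htd : t * d = s := div_mul_cancel₀ s (ne_of_gt hdpos)
    set w := δ t v with hw
    have h1 : dist (1 : G) w = s := by rw [hw, hdist1 t htpos, htd]
    have ha : p * w ∈ Metric.ball p r := by
      rw [Metric.mem_ball, dist_comm]
      calc dist p (p * w) = dist (p * 1) (p * w) := by rw [mul_one]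
        _ = dist 1 w := hleft p 1 w
        _ < r := h1 ▸ hsr
    have hb : p * w⁻¹ ∈ Metric.ball p r := by
      rw [Metric.mem_ball, dist_comm]
      have : dist p (p * w⁻¹) = dist w 1 := by
        calc dist p (p * w⁻¹) = dist (p * 1) (p * w⁻¹) := by rw [mul_one]
          _ = dist 1 w⁻¹ := hleft p 1 w⁻¹
          _ = dist (w * 1) (w * w⁻¹) := (hleft w 1 w⁻¹).symm
          _ = dist w 1 := by rw [mul_one, mul_inv_cancel]
      rw [this, dist_comm, h1]; exact hsr
    have := Metric.dist_le_diam_of_mem hbd ha hb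
    calc 2 * s = dist (p * w) (p * w⁻¹) := by
          rw [hleft p w w⁻¹, hw, hkey t htpos, htd]
      _ ≤ _ := this
  -- take the limit s → r
  refine le_of_forall_sub_le fun ε hε => ?_
  set s := r - min (ε/2) (r/2) with hsdef
  have hmin : 0 < min (ε/2) (r/2) := lt_min (by linarith) (by linarith)
  have hmin2 : min (ε/2) (r/2) ≤ ε/2 := min_le_left _ _
  have hmin3 : min (ε/2) (r/2) ≤ r/2 := min_le_right _ _
  have hs : 0 < s := by simp only [hsdef]; linarith
  have hsr : s < r := by simp only [hsdef]; linarith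
  have := hlower s hs hsr
  simp only [hsdef] at this
  linarith
end

section
/- Let V and W be homogeneous linear subspaces of a graded group G (identified with its Lie algebra via exponential coordinates). If V ∩ W = {0} and dim V + dim W = dim G, then the multiplication map W × V → G, (w,v) ↦ wv, is a surjective diffeomorphism. -/
/-- Let `V` and `W` be homogeneous linear subspaces of a graded group `G`, identified with
its Lie algebra (a finite-dimensional real vector space `E`) via exponential coordinates,
with smooth group operation `μ` (given by the Baker–Campbell–Hausdorff formula, so that the
identity is `0`, inversion is negation, and the differential of `μ` at the origin is
addition) and dilations `δ`.  If `V ∩ W = {0}` and `dim V + dim W = dim G`, then the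
multiplication map `W × V → G`, `(w, v) ↦ w v`, is a surjective diffeomorphism. -/
theorem splitting_multiplication_diffeomorphism
    {E : Type*} [NormedAddCommGroup E] [NormedSpace ℝ E] [FiniteDimensional ℝ E]
    (μ : E → E → E)
    (hsmooth : ContDiff ℝ (⊤ : ℕ∞) fun p : E × E => μ p.1 p.2)
    (hassoc : ∀ x y z : E, μ (μ x y) z = μ x (μ y z))
    (hid : ∀ x : E, μ 0 x = x ∧ μ x 0 = x)
    (hinv : ∀ x : E, μ x (-x) = 0)
    (hderiv : HasFDerivAt (fun p : E × E => μ p.1 p.2)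
      (ContinuousLinearMap.fst ℝ E E + ContinuousLinearMap.snd ℝ E E) (0, 0))
    (δ : ℝ → E →ₗ[ℝ] E)
    (hδaut : ∀ lam : ℝ, 0 < lam → ∀ x y : E, μ (δ lam x) (δ lam y) = δ lam (μ x y))
    (hδmul : ∀ lam mu : ℝ, 0 < lam → 0 < mu → (δ lam).comp (δ mu) = δ (lam * mu))
    (hδid : δ 1 = LinearMap.id)
    (hδcont : Continuous fun q : ℝ × E => δ q.1 q.2)
    (hδcontract : ∀ x : E,
      Filter.Tendsto (fun lam => δ lam x) (nhdsWithin 0 (Set.Ioi 0)) (nhds 0))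
    (V W : Submodule ℝ E)
    (hVhom : ∀ lam : ℝ, 0 < lam → ∀ v ∈ V, δ lam v ∈ V)
    (hWhom : ∀ lam : ℝ, 0 < lam → ∀ w ∈ W, δ lam w ∈ W)
    (hVW : V ⊓ W = ⊥)
    (hdim : Module.finrank ℝ V + Module.finrank ℝ W = Module.finrank ℝ E) :
    ∃ F : (W × V) ≃ E,
      (∀ p : W × V, F p = μ (p.1 : E) (p.2 : E)) ∧
      ContDiff ℝ (⊤ : ℕ∞) (F : W × V → E) ∧ ContDiff ℝ (⊤ : ℕ∞) (F.symm : E → W × V) := by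
  classical
  have hμ00 : μ 0 0 = 0 := (hid 0).1
  -- dilation inverse facts
  have hδcomp : ∀ lam mu : ℝ, 0 < lam → 0 < mu → ∀ x : E,
      δ lam (δ mu x) = δ (lam * mu) x := by
    intro lam mu hl hm x
    exact DFunLike.congr_fun (hδmul lam mu hl hm) x
  have hδinv1 : ∀ lam : ℝ, 0 < lam → ∀ x : E, δ lam⁻¹ (δ lam x) = x := by
    intro lam hl x
    rw [hδcomp lam⁻¹ lam (inv_pos.2 hl) hl, inv_mul_cancel₀ hl.ne', hδid]; rfl
  -- complementarity
  have hdisj : Disjoint W V := by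
    rw [disjoint_iff, inf_comm]; exact hVW
  have hcompl : IsCompl W V :=
    ⟨hdisj, codisjoint_iff.2 (Submodule.eq_top_of_disjoint W V
      (by rw [add_comm]; exact hdim.ge) hdisj)⟩
  set Llin := Submodule.prodEquivOfIsCompl W V hcompl with hLlin
  set L : (W × V) ≃L[ℝ] E := Llin.toContinuousLinearEquiv with hL
  set ι : (W × V) →L[ℝ] E × E := (W.subtypeL).prodMap (V.subtypeL) with hι
  set g : W × V → E := fun q => μ (q.1 : E) (q.2 : E) with hgdef
  have hg : ContDiff ℝ (⊤ : ℕ∞) g := hsmooth.comp ι.contDiff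
  -- derivative of g at the origin
  have hgd : HasFDerivAt g ((L : (W × V) →L[ℝ] E)) (0, 0) := by
    have h2 := ι.hasFDerivAt (x := ((0, 0) : W × V))
    have h3 : HasFDerivAt (fun p : E × E => μ p.1 p.2)
        (ContinuousLinearMap.fst ℝ E E + ContinuousLinearMap.snd ℝ E E) (ι (0, 0)) := by
      have : ι ((0, 0) : W × V) = (0, 0) := rfl
      rw [this]; exact hderiv
    have h1 := h3.comp ((0, 0) : W × V) h2
    have heq : (ContinuousLinearMap.fst ℝ E E + ContinuousLinearMap.snd ℝ E E).comp ι
        = (L : (W × V) →L[ℝ] E) := by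
      apply ContinuousLinearMap.ext
      intro q
      simp [hι, hL, hLlin]
    exact heq ▸ h1
  have hgat : ContDiffAt ℝ (⊤ : ℕ∞) g ((0, 0) : W × V) := hg.contDiffAt
  set Φ : OpenPartialHomeomorph (W × V) E := hgat.toOpenPartialHomeomorph g hgd (by simp) with hΦ
  have hΦcoe : ⇑Φ = g := rfl
  have h0src : ((0, 0) : W × V) ∈ Φ.source :=
    hgat.mem_toOpenPartialHomeomorph_source hgd (by simp)
  have hg00 : g ((0, 0) : W × V) = 0 := by
    show μ ((0 : W) : E) ((0 : V) : E) = 0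
    rw [ZeroMemClass.coe_zero, ZeroMemClass.coe_zero, hμ00]
  have h0tgt : (0 : E) ∈ Φ.target := by
    have := hgat.image_mem_toOpenPartialHomeomorph_target hgd (by simp)
    rwa [hg00] at this
  -- eventually the scaled point is in the source
  have hscale_src : ∀ p : W × V, ∀ᶠ lam in nhdsWithin (0 : ℝ) (Set.Ioi 0),
      ∀ h : 0 < lam,
        ((⟨δ lam ↑p.1, hWhom lam h _ p.1.2⟩, ⟨δ lam ↑p.2, hVhom lam h _ p.2.2⟩) : W × V)
          ∈ Φ.source := by
    intro p
    have hn : Φ.source ∈ nhds ((0, 0) : W × V) := Φ.open_source.mem_nhds h0src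
    rw [nhds_prod_eq, Filter.mem_prod_iff] at hn
    obtain ⟨u, hu, v, hv, huv⟩ := hn
    rw [nhds_subtype_eq_comap, Filter.mem_comap] at hu hv
    obtain ⟨u', hu', hu'sub⟩ := hu
    obtain ⟨v', hv', hv'sub⟩ := hv
    filter_upwards [(hδcontract ↑p.1) hu', (hδcontract ↑p.2) hv'] with lam h1 h2 h
    exact huv (Set.mk_mem_prod (hu'sub h1) (hv'sub h2))
  -- injectivity
  have hginj : Function.Injective g := by
    intro p q hpq
    obtain ⟨lam, ⟨hp', hq', hlam'⟩⟩ :=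
      ((hscale_src p).and ((hscale_src q).and eventually_mem_nhdsWithin)).exists
    have hlam : (0 : ℝ) < lam := hlam'
    set p' : W × V := (⟨δ lam ↑p.1, hWhom lam hlam _ p.1.2⟩,
      ⟨δ lam ↑p.2, hVhom lam hlam _ p.2.2⟩) with hp'def
    set q' : W × V := (⟨δ lam ↑q.1, hWhom lam hlam _ q.1.2⟩,
      ⟨δ lam ↑q.2, hVhom lam hlam _ q.2.2⟩) with hq'def
    have e1 : g p' = g q' := by
      show μ (δ lam ↑p.1) (δ lam ↑p.2) = μ (δ lam ↑q.1) (δ lam ↑q.2)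
      rw [hδaut lam hlam, hδaut lam hlam]
      exact congrArg _ hpq
    have e2 : p' = q' := Φ.injOn (hp' hlam) (hq' hlam) e1
    have f1 : (↑p.1 : E) = ↑q.1 := by
      have h := congrArg (fun z : W × V => δ lam⁻¹ (↑z.1 : E)) e2
      simpa [hp'def, hq'def, hδinv1 lam hlam] using h
    have f2 : (↑p.2 : E) = ↑q.2 := by
      have h := congrArg (fun z : W × V => δ lam⁻¹ (↑z.2 : E)) e2
      simpa [hp'def, hq'def, hδinv1 lam hlam] using h
    exact Prod.ext (Subtype.ext f1) (Subtype.ext f2)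
  -- surjectivity
  have hgsurj : Function.Surjective g := by
    intro x
    have hev : ∀ᶠ lam in nhdsWithin (0 : ℝ) (Set.Ioi 0), δ lam x ∈ Φ.target :=
      (hδcontract x) (Φ.open_target.mem_nhds h0tgt)
    obtain ⟨lam, hmem, hlam'⟩ := (hev.and eventually_mem_nhdsWithin).exists
    have hlam : (0 : ℝ) < lam := hlam'
    have hinvpos : (0 : ℝ) < lam⁻¹ := inv_pos.2 hlam
    set p := Φ.symm (δ lam x) with hp
    have hgp : g p = δ lam x := Φ.right_inv hmem
    refine ⟨(⟨δ lam⁻¹ ↑p.1, hWhom _ hinvpos _ p.1.2⟩,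
             ⟨δ lam⁻¹ ↑p.2, hVhom _ hinvpos _ p.2.2⟩), ?_⟩
    show μ (δ lam⁻¹ ↑p.1) (δ lam⁻¹ ↑p.2) = x
    rw [hδaut lam⁻¹ hinvpos]
    have h2 : μ (↑p.1) (↑p.2) = δ lam x := hgp
    rw [h2, hδinv1 lam hlam]
  set F : (W × V) ≃ E := Equiv.ofBijective g ⟨hginj, hgsurj⟩ with hF
  -- smoothness of the inverse near 0
  have hΦsymm0 : Φ.symm 0 = ((0, 0) : W × V) := by
    have h := Φ.left_inv h0src
    rw [hΦcoe, hg00] at h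
    exact h
  have hsymm_at : ContDiffAt ℝ (⊤ : ℕ∞) Φ.symm 0 := by
    apply Φ.contDiffAt_symm h0tgt
    · rw [hΦsymm0]; exact hgd
    · rw [hΦsymm0]; exact hgat
  have hfin : ∀ n : ℕ, ∃ u ∈ nhds (0 : E), ContDiffOn ℝ n Φ.symm u := fun n =>
    (hsymm_at.of_le (by exact_mod_cast le_top)).contDiffOn le_rfl (by simp)
  refine ⟨F, fun p => rfl, hg, contDiff_iff_contDiffAt.2 fun x => ?_⟩
  rw [contDiffAt_infty]
  intro n
  obtain ⟨u, hu, hcdu⟩ := hfin n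
  have h0iu : (0 : E) ∈ interior u := mem_interior_iff_mem_nhds.2 hu
  set t := interior u ∩ Φ.target with htdef
  have htopen : IsOpen t := isOpen_interior.inter Φ.open_target
  have h0t : (0 : E) ∈ t := ⟨h0iu, h0tgt⟩
  have hev : ∀ᶠ lam in nhdsWithin (0 : ℝ) (Set.Ioi 0), δ lam x ∈ t :=
    (hδcontract x) (htopen.mem_nhds h0t)
  obtain ⟨lam, hmemt, hlam'⟩ := (hev.and eventually_mem_nhdsWithin).exists
  have hlam : (0 : ℝ) < lam := hlam'
  have hinvpos : (0 : ℝ) < lam⁻¹ := inv_pos.2 hlam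
  set Dlam : E →L[ℝ] E := LinearMap.toContinuousLinearMap (δ lam) with hDlam
  set rW : W →ₗ[ℝ] W := (δ lam⁻¹).restrict (fun z hz => hWhom lam⁻¹ hinvpos z hz) with hrW
  set rV : V →ₗ[ℝ] V := (δ lam⁻¹).restrict (fun z hz => hVhom lam⁻¹ hinvpos z hz) with hrV
  set R : (W × V) →L[ℝ] (W × V) := LinearMap.toContinuousLinearMap (rW.prodMap rV) with hR
  set cand : E → W × V := fun y => R (Φ.symm (Dlam y)) with hcand_def
  have hcand : ContDiffAt ℝ n cand x := by
    have h1 : ContDiffAt ℝ n Φ.symm (Dlam x) := by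
      apply hcdu.contDiffAt
      have hmem : Dlam x ∈ interior u := hmemt.1
      exact mem_interior_iff_mem_nhds.1 hmem
    exact R.contDiff.contDiffAt.comp x (h1.comp x Dlam.contDiff.contDiffAt)
  apply hcand.congr_of_eventuallyEq
  have hUopen : IsOpen (Dlam ⁻¹' t) := htopen.preimage Dlam.continuous
  have hxU : x ∈ Dlam ⁻¹' t := hmemt
  filter_upwards [hUopen.mem_nhds hxU] with y hy
  have hyt : Dlam y ∈ Φ.target := hy.2
  set q := Φ.symm (Dlam y) with hq
  have hgq : g q = Dlam y := Φ.right_inv hyt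
  have hFc : F (cand y) = y := by
    show μ (δ lam⁻¹ ↑q.1) (δ lam⁻¹ ↑q.2) = y
    rw [hδaut lam⁻¹ hinvpos]
    have h2 : μ (↑q.1) (↑q.2) = δ lam y := hgq
    rw [h2, hδinv1 lam hlam]
  exact (F.symm_apply_eq).2 hFc.symm
end

section
/- Let P be a homogeneous subgroup of homogeneous dimension d of a Carnot group G with homogeneous distance ρ. Then the restriction to P of the d-dimensional Hausdorff measure H^d (or spherical measure S^d) built from ρ is a nonzero, locally finite, left-invariant measure on P, i.e., a Haar measure of P. -/
open MeasureTheory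

/-- The `d`-dimensional spherical Hausdorff measure of a metric space: in the Carathéodory
construction, a covering set is charged `(2r)^d` where `r` is the radius of the smallest
closed ball containing it (so only coverings by closed balls matter). -/
noncomputable def sphericalMeasure (X : Type*) [MetricSpace X] [MeasurableSpace X]
    [BorelSpace X] (d : ℝ) : Measure X :=
  Measure.mkMetric' fun E =>
    ⨅ (x : X) (r : ℝ) (_ : 0 < r) (_ : E ⊆ Metric.closedBall x r),
      ENNReal.ofReal (2 * r) ^ d

/-!
Left invariance and the scaling `(δ_λ)_# θ = λ^(-d) θ` make `θ` uniformly distributed on `P`: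
every closed ball of radius `r` centred on `P` has measure `c r^d`, with `c = θ(B(1, 1))` finite
(compactness) and positive (`θ` charges open sets meeting `P`). Since `θ` lives on `P`, this
gives `θ s ≤ c (diam s)^d` for every `s`, hence `θ ≤ c H^d⌊P`. Conversely, `r`-separated points
of a bounded piece of `P` carry disjoint balls of mass `c (r/2)^d` inside one big ball, so that
piece has covering numbers `O(r^(-d))` and finite `H^d` measure. Finally `H^d ≤ S^d ≤ 2^d H^d`
and both are invariant under the isometries `x ↦ p x`.
-/

open Metric Set Filter Topology
open scoped ENNReal NNReal

lemma ENNReal.le_mul_ofReal_rpow_of_forall_lt {a c : ℝ≥0∞} (hc : c ≠ ∞) {D d : ℝ}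
    (h : ∀ r, D < r → a ≤ c * ENNReal.ofReal r ^ d) : a ≤ c * ENNReal.ofReal D ^ d := by
  have hcont : Continuous fun r : ℝ => c * ENNReal.ofReal r ^ d :=
    ENNReal.continuous_const_mul hc |>.comp <|
      (ENNReal.continuous_rpow_const).comp ENNReal.continuous_ofReal
  exact ge_of_tendsto (hcont.tendsto D |>.mono_left nhdsWithin_le_nhds)
    (eventually_nhdsWithin_of_forall (s := Ioi D) h)

namespace MeasureTheory

theorem OuterMeasure.mkMetric'_mono {X : Type*} [EMetricSpace X] {m₁ m₂ : Set X → ℝ≥0∞}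
    (h : m₁ ≤ m₂) : (mkMetric' m₁ : OuterMeasure X) ≤ mkMetric' m₂ :=
  iSup₂_mono fun _ _ => mkMetric'.le_pre.2 fun _ hs => (mkMetric'.pre_le hs).trans (h _)

theorem OuterMeasure.mkMetric'_image_isometryEquiv {X : Type*} [EMetricSpace X]
    {m : Set X → ℝ≥0∞} (e : X ≃ᵢ X) (hm : ∀ s, m (e '' s) = m s) (s : Set X) :
    mkMetric' m (e '' s) = mkMetric' m s := by
  suffices comap e (mkMetric' m) = mkMetric' m from congrFun (congrArg DFunLike.coe this) s
  simp only [mkMetric', mkMetric'.pre, comap_iSup]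
  refine iSup_congr fun r => iSup_congr fun _ => ?_
  rw [comap_boundedBy _ (Or.inr e.surjective)]
  congr with t : 1
  exact extend_congr _ (by rw [e.isometry.ediam_image]) fun _ _ => hm t

variable {X : Type*} [EMetricSpace X] [MeasurableSpace X] [BorelSpace X]

theorem Measure.mkMetric'_mono {m₁ m₂ : Set X → ℝ≥0∞} (h : m₁ ≤ m₂) :
    (mkMetric' m₁ : Measure X) ≤ mkMetric' m₂ :=
  Measure.le_iff.2 fun s hs => by
    simp only [mkMetric', toMeasure_apply _ _ hs]
    exact OuterMeasure.mkMetric'_mono h s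

theorem Measure.map_mkMetric'_isometryEquiv {m : Set X → ℝ≥0∞} (e : X ≃ᵢ X)
    (hm : ∀ s, m (e '' s) = m s) : map e (mkMetric' m : Measure X) = mkMetric' m := by
  have hm' : ∀ s, m (e.symm '' s) = m s := fun s => by
    rw [← hm, ← image_comp, e.self_comp_symm, image_id]
  ext s hs
  rw [map_apply e.continuous.measurable hs, mkMetric', toMeasure_apply _ _ hs,
    toMeasure_apply _ _ (hs.preimage e.continuous.measurable), ← e.image_symm]
  exact OuterMeasure.mkMetric'_image_isometryEquiv e.symm hm' s

end MeasureTheory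

-- `sphericalMeasure X d` is `Measure.mkMetric' (sphericalGauge X d)` by definition.
noncomputable def sphericalGauge (X : Type*) [MetricSpace X] (d : ℝ) (E : Set X) : ℝ≥0∞ :=
  ⨅ (x : X) (r : ℝ) (_ : 0 < r) (_ : E ⊆ closedBall x r), ENNReal.ofReal (2 * r) ^ d

section Spherical

variable {X : Type*} [MetricSpace X] {d : ℝ}

theorem ediam_rpow_le_sphericalGauge (hd : 0 ≤ d) (E : Set X) :
    ediam E ^ d ≤ sphericalGauge X d E := by
  refine le_iInf₂ fun x r => le_iInf₂ fun hr hE => ENNReal.rpow_le_rpow ?_ hd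
  refine ediam_le_of_forall_dist_le fun a ha b hb => ?_
  calc dist a b ≤ dist a x + dist b x := dist_triangle_right _ _ _
    _ ≤ 2 * r := by linarith [mem_closedBall.1 (hE ha), mem_closedBall.1 (hE hb)]

theorem sphericalGauge_le [Nonempty X] (hd : 0 < d) (E : Set X) :
    sphericalGauge X d E ≤ 2 ^ d * ediam E ^ d := by
  rcases eq_or_ne (ediam E) ∞ with htop | htop
  · simp [htop, ENNReal.top_rpow_of_pos hd, ENNReal.mul_top (by positivity : (2 : ℝ≥0∞) ^ d ≠ 0)]
  have hball : ∀ r, diam E < r → ∃ x, E ⊆ closedBall x r := fun r hr => by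
    rcases E.eq_empty_or_nonempty with rfl | ⟨z, hz⟩
    · exact ⟨Classical.arbitrary X, empty_subset _⟩
    · exact ⟨z, fun w hw => (dist_le_diam_of_mem (isBounded_iff_ediam_ne_top.2 htop) hw hz).trans
        hr.le⟩
  rw [← ENNReal.ofReal_toReal htop, ← ENNReal.ofReal_ofNat 2]
  refine ENNReal.le_mul_ofReal_rpow_of_forall_lt (by simp) fun r hr => ?_
  have hr0 : 0 < r := diam_nonneg.trans_lt hr
  obtain ⟨x, hx⟩ := hball r hr
  calc sphericalGauge X d E ≤ ENNReal.ofReal (2 * r) ^ d :=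
        iInf₂_le_of_le x r <| iInf₂_le_of_le hr0 hx le_rfl
    _ = ENNReal.ofReal 2 ^ d * ENNReal.ofReal r ^ d := by
        rw [ENNReal.ofReal_mul zero_le_two, ENNReal.mul_rpow_of_nonneg _ _ hd.le]

theorem sphericalGauge_image_isometryEquiv (e : X ≃ᵢ X) (E : Set X) :
    sphericalGauge X d (e '' E) = sphericalGauge X d E := by
  suffices ∀ (e : X ≃ᵢ X) E, sphericalGauge X d (e '' E) ≤ sphericalGauge X d E from
    le_antisymm (this e E) <| by simpa [image_image] using this e.symm (e '' E)
  intro e E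
  refine le_iInf₂ fun x r => le_iInf₂ fun hr hE =>
    iInf₂_le_of_le (e x) r <| iInf₂_le_of_le hr ?_ le_rfl
  rintro - ⟨y, hy, rfl⟩
  simpa [e.dist_eq] using hE hy

variable [MeasurableSpace X] [BorelSpace X]

theorem hausdorffMeasure_le_sphericalMeasure (hd : 0 ≤ d) : μH[d] ≤ sphericalMeasure X d :=
  Measure.mkMetric'_mono (ediam_rpow_le_sphericalGauge hd)

theorem sphericalMeasure_le_smul_hausdorffMeasure [Nonempty X] (hd : 0 < d) :
    sphericalMeasure X d ≤ (2 : ℝ≥0∞) ^ d • μH[d] :=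
  (Measure.mkMetric'_mono (sphericalGauge_le hd)).trans <|
    Measure.mkMetric_mono_smul (m₁ := fun r => 2 ^ d * r ^ d) (by simp) (by positivity)
      (Eventually.of_forall fun _ => le_rfl)

theorem IsometryEquiv.measurePreserving_sphericalMeasure (e : X ≃ᵢ X) :
    MeasurePreserving e (sphericalMeasure X d) (sphericalMeasure X d) :=
  ⟨e.continuous.measurable,
    Measure.map_mkMetric'_isometryEquiv e (sphericalGauge_image_isometryEquiv e)⟩

end Spherical

section Covering

variable {X : Type*} [MetricSpace X] [MeasurableSpace X] [BorelSpace X]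

theorem Metric.IsSeparated.encard_mul_le_measure_biUnion {θ : Measure X} {C : Set X} {r : ℝ≥0}
    {m : ℝ≥0∞} (hC : IsSeparated (2 * r) C) (hm : ∀ x ∈ C, m ≤ θ (closedBall x r)) :
    C.encard * m ≤ θ (⋃ x ∈ C, closedBall x r) := by
  have hfinite : ∀ F ⊆ C, F.Finite → F.encard * m ≤ θ (⋃ x ∈ C, closedBall x r) := by
    intro F hFC hF
    have hdisj : (hF.toFinset : Set X).PairwiseDisjoint fun x => closedBall x r := by
      intro x hx y hy hxy
      refine closedBall_disjoint_closedBall ?_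
      have hsep : ((2 * r : ℝ≥0) : ℝ≥0∞) < edist x y :=
        mod_cast hC (hFC (hF.mem_toFinset.1 hx)) (hFC (hF.mem_toFinset.1 hy)) hxy
      rw [edist_nndist, ENNReal.coe_lt_coe] at hsep
      rw [dist_nndist, ← two_mul, ← NNReal.coe_two, ← NNReal.coe_mul]
      exact_mod_cast hsep
    calc F.encard * m = ∑ x ∈ hF.toFinset, m := by
          simp [hF.encard_eq_coe_toFinset_card]
      _ ≤ ∑ x ∈ hF.toFinset, θ (closedBall x r) :=
          Finset.sum_le_sum fun x hx => hm x (hFC (hF.mem_toFinset.1 hx))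
      _ = θ (⋃ x ∈ hF.toFinset, closedBall x r) :=
          (measure_biUnion_finset hdisj fun _ _ => measurableSet_closedBall).symm
      _ ≤ θ (⋃ x ∈ C, closedBall x r) :=
          measure_mono <| biUnion_subset_biUnion_left fun x hx => hFC (hF.mem_toFinset.1 hx)
  rcases C.finite_or_infinite with hC | hC
  · exact hfinite C subset_rfl hC
  rw [Set.Infinite.encard_eq hC, ENat.toENNReal_top, ← ENNReal.iSup_natCast, ENNReal.iSup_mul]
  refine iSup_le fun n => ?_
  obtain ⟨F, hFC, hF⟩ := exists_subset_encard_eq (s := C) (k := n) (by simp [hC.encard_eq])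
  simpa [hF] using hfinite F hFC (finite_of_encard_eq_coe hF)

theorem Metric.packingNumber_two_mul_mul_le {θ : Measure X} {A : Set X} {r : ℝ≥0} {m : ℝ≥0∞}
    (hm : ∀ x ∈ A, m ≤ θ (closedBall x r)) :
    packingNumber (2 * r) A * m ≤ θ (⋃ x ∈ A, closedBall x r) := by
  simp only [packingNumber, ENat.toENNReal_iSup, ENNReal.iSup_mul, iSup_le_iff]
  intro C hCA hC
  exact (hC.encard_mul_le_measure_biUnion fun x hx => hm x (hCA hx)).trans <|
    measure_mono <| biUnion_subset_biUnion_left hCA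

theorem hausdorffMeasure_le_of_coveringNumber {A : Set X} {d : ℝ} {M : ℝ≥0∞} (hd : 0 ≤ d)
    (h : ∀ᶠ ε in 𝓝[>] (0 : ℝ≥0), coveringNumber ε A * (ε : ℝ≥0∞) ^ d ≤ M) :
    μH[d] A ≤ 2 ^ d * M := by
  rcases eq_or_ne M ∞ with rfl | hM
  · simp [ENNReal.mul_top (by positivity : (2 : ℝ≥0∞) ^ d ≠ 0)]
  have hfin : ∀ᶠ ε in 𝓝[>] (0 : ℝ≥0), coveringNumber ε A ≠ ⊤ := by
    filter_upwards [h, self_mem_nhdsWithin] with ε hε hε0 htop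
    have hεd : (ε : ℝ≥0∞) ^ d ≠ 0 := (ENNReal.rpow_pos (by simpa using hε0) ENNReal.coe_ne_top).ne'
    rw [htop, ENat.toENNReal_top, ENNReal.top_mul hεd] at hε
    exact hM (top_le_iff.1 hε)
  have : ∀ ε : ℝ≥0, Countable (minimalCover ε A) := fun _ =>
    finite_minimalCover.countable.to_subtype
  have hr : Tendsto (fun ε : ℝ≥0 => 2 * (ε : ℝ≥0∞)) (𝓝[>] 0) (𝓝 0) :=
    tendsto_nhdsWithin_of_tendsto_nhds <|
      ((ENNReal.continuous_const_mul (by simp)).comp ENNReal.continuous_coe).tendsto' 0 0 (by simp)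
  refine (Measure.hausdorffMeasure_le_liminf_tsum d A _ hr
    (fun ε (x : minimalCover ε A) => closedEBall (x : X) ε)
    (Eventually.of_forall fun _ _ => ediam_closedEBall_le) ?_).trans <|
    liminf_le_of_frequently_le' <| (h.and hfin).frequently.mono fun ε ⟨hε, hεfin⟩ => ?_
  · filter_upwards [hfin] with ε hε
    simpa only [biUnion_eq_iUnion] using
      isCover_iff_subset_iUnion_closedEBall.1 (isCover_minimalCover hε)
  · calc ∑' x : minimalCover ε A, ediam (closedEBall (x : X) ε) ^ d
        ≤ ∑' _ : minimalCover ε A, (2 * (ε : ℝ≥0∞)) ^ d :=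
          ENNReal.tsum_le_tsum fun _ => ENNReal.rpow_le_rpow ediam_closedEBall_le hd
      _ = 2 ^ d * (coveringNumber ε A * (ε : ℝ≥0∞) ^ d) := by
          rw [ENNReal.tsum_const, ← Set.encard, encard_minimalCover hεfin,
            ENNReal.mul_rpow_of_nonneg _ _ hd]
          ring
      _ ≤ 2 ^ d * M := by gcongr

end Covering

namespace MeasureTheory.Measure

variable {X : Type*} [MetricSpace X] [MeasurableSpace X]

def IsUniformlyDistributedOn (θ : Measure X) (S : Set X) (c : ℝ≥0∞) (d : ℝ) : Prop :=
  ∀ p ∈ S, ∀ r : ℝ, 0 < r → θ (closedBall p r) = c * ENNReal.ofReal r ^ d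

namespace IsUniformlyDistributedOn

variable {θ : Measure X} {S : Set X} {c : ℝ≥0∞} {d : ℝ}

theorem measure_le_mul_ediam_rpow (h : θ.IsUniformlyDistributedOn S c d) (hc : c ≠ 0)
    (hc' : c ≠ ∞) (hd : 0 < d) {E : Set X} {p : X} (hpS : p ∈ S) (hpE : p ∈ E) :
    θ E ≤ c * ediam E ^ d := by
  rcases eq_or_ne (ediam E) ∞ with htop | htop
  · simp [htop, ENNReal.top_rpow_of_pos hd, ENNReal.mul_top hc]
  rw [← ENNReal.ofReal_toReal htop]
  refine ENNReal.le_mul_ofReal_rpow_of_forall_lt hc' fun r hr => ?_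
  rw [← h p hpS r (diam_nonneg.trans_lt hr)]
  exact measure_mono fun x hx =>
    (dist_le_diam_of_mem (isBounded_iff_ediam_ne_top.2 htop) hx hpE).trans hr.le

variable [BorelSpace X]

theorem le_smul_restrict_hausdorffMeasure (h : θ.IsUniformlyDistributedOn S c d) (hc : c ≠ 0)
    (hc' : c ≠ ∞) (hd : 0 < d) (hθS : θ Sᶜ = 0) : θ ≤ c • μH[d].restrict S := by
  have hdiam : ∀ s, θ s ≤ c * ediam s ^ d := fun s => by
    rw [← measure_inter_conull hθS]
    rcases (s ∩ S).eq_empty_or_nonempty with hs | ⟨p, hps, hpS⟩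
    · simp [hs]
    · exact (h.measure_le_mul_ediam_rpow hc hc' hd hpS (E := s ∩ S) ⟨hps, hpS⟩).trans <| by
        gcongr
        exact inter_subset_left
  have hθ : θ ≤ c • μH[d] :=
    (le_mkMetric (fun r => c * r ^ d) θ 1 one_pos fun s _ => hdiam s).trans <|
      mkMetric_mono_smul hc' hc (Eventually.of_forall fun _ => le_rfl)
  calc θ = θ.restrict S := (restrict_eq_self_of_ae_mem (ae_iff.2 hθS)).symm
    _ ≤ (c • μH[d]).restrict S := restrict_mono subset_rfl hθ
    _ = c • μH[d].restrict S := restrict_smul c _ S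

theorem hausdorffMeasure_lt_top (h : θ.IsUniformlyDistributedOn S c d) (hc : c ≠ 0)
    (hc' : c ≠ ∞) (hd : 0 < d) {A : Set X} (hAS : A ⊆ S) (hA : Bornology.IsBounded A) :
    μH[d] A < ∞ := by
  rcases A.eq_empty_or_nonempty with rfl | ⟨p, hp⟩
  · simp
  obtain ⟨R, hR⟩ := hA.subset_closedBall p
  have hR0 : 0 ≤ R := dist_self p ▸ hR hp
  set K := ENNReal.ofReal (R + 1) ^ d
  have hcover : ∀ r : ℝ≥0, 0 < r → r ≤ 1 →
      coveringNumber (2 * r) A * ((2 * r : ℝ≥0) : ℝ≥0∞) ^ d ≤ 2 ^ d * K := by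
    intro r hr0 hr1
    have hball : ⋃ x ∈ A, closedBall x r ⊆ closedBall p (R + 1) :=
      iUnion₂_subset fun x hx => closedBall_subset_closedBall' <| by
        have : (r : ℝ) ≤ 1 := mod_cast hr1
        linarith [mem_closedBall.1 (hR hx)]
    have hpack : packingNumber (2 * r) A * (c * (r : ℝ≥0∞) ^ d) ≤ c * K :=
      calc _ ≤ θ (⋃ x ∈ A, closedBall x r) := packingNumber_two_mul_mul_le fun x hx =>
            (h x (hAS hx) r hr0).ge.trans_eq' (by rw [ENNReal.ofReal_coe_nnreal])
        _ ≤ θ (closedBall p (R + 1)) := measure_mono hball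
        _ = c * K := h p (hAS hp) _ (by linarith)
    rw [mul_left_comm, ENNReal.mul_le_mul_iff_right hc hc'] at hpack
    calc coveringNumber (2 * r) A * ((2 * r : ℝ≥0) : ℝ≥0∞) ^ d
        ≤ 2 ^ d * (packingNumber (2 * r) A * (r : ℝ≥0∞) ^ d) := by
          rw [ENNReal.coe_mul, ENNReal.coe_ofNat, ENNReal.mul_rpow_of_nonneg _ _ hd.le,
            mul_left_comm]
          gcongr
          exact mod_cast coveringNumber_le_packingNumber _ _
      _ ≤ 2 ^ d * K := by gcongr
  refine (hausdorffMeasure_le_of_coveringNumber (M := 2 ^ d * K) hd.le ?_).trans_lt <|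
    ENNReal.mul_lt_top (by finiteness) (by finiteness)
  filter_upwards [Ioc_mem_nhdsGT (zero_lt_two : (0 : ℝ≥0) < 2)] with ε ⟨hε0, hε2⟩
  have := hcover (ε / 2) (half_pos hε0) (by rwa [div_le_one two_pos])
  rwa [mul_div_cancel₀ _ two_ne_zero] at this

end IsUniformlyDistributedOn

end MeasureTheory.Measure

theorem MeasureTheory.Measure.measure_closedBall_eq_of_map_eq_smul {X : Type*} [MetricSpace X]
    [MeasurableSpace X] [BorelSpace X] {θ : Measure X} {d lam : ℝ} {f : X → X} {o : X}
    (hlam : 0 < lam) (ho : f o = o) (hf : ∀ x y, dist (f x) (f y) = lam * dist x y)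
    (hθ : map f θ = ENNReal.ofReal (lam ^ (-d)) • θ) :
    θ (closedBall o lam) = ENNReal.ofReal lam ^ d * θ (closedBall o 1) := by
  have hcont : Continuous f :=
    (LipschitzWith.of_dist_le_mul fun x y => (hf x y).trans_le <| by
      rw [Real.coe_toNNReal lam hlam.le]).continuous
  have hpre : f ⁻¹' closedBall o lam = closedBall o 1 := by
    ext x
    have hdist := hf x o
    rw [ho] at hdist
    simp [hdist, mul_le_iff_le_one_right hlam]
  have hball := congrArg (· (closedBall o lam)) hθ
  simp only [map_apply hcont.measurable measurableSet_closedBall, hpre, smul_apply,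
    smul_eq_mul] at hball
  rw [hball, ← mul_assoc, ENNReal.ofReal_rpow_of_pos hlam, ← ENNReal.ofReal_mul (by positivity),
    ← Real.rpow_add hlam, add_neg_cancel, Real.rpow_zero, ENNReal.ofReal_one, one_mul]

theorem MeasureTheory.Measure.isUniformlyDistributedOn_of_map_dilation {G : Type*} [Group G]
    [MetricSpace G] [IsIsometricSMul G G] [MeasurableSpace G] [BorelSpace G] {δ : ℝ → G → G}
    {P : Subgroup G} {θ : Measure G} {d : ℝ} (hδ_one : ∀ lam, 0 < lam → δ lam 1 = 1)
    (hδ : ∀ lam, 0 < lam → ∀ x y, dist (δ lam x) (δ lam y) = lam * dist x y)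
    (hθ_inv : ∀ p ∈ P, map (p * ·) θ = θ)
    (hθ_scal : ∀ lam, 0 < lam → map (δ lam) θ = ENNReal.ofReal (lam ^ (-d)) • θ) :
    θ.IsUniformlyDistributedOn P (θ (closedBall 1 1)) d := by
  intro p hp r hr
  rw [mul_comm, ← measure_closedBall_eq_of_map_eq_smul hr (hδ_one r hr) (hδ r hr) (hθ_scal r hr)]
  conv_lhs => rw [← hθ_inv p hp]
  rw [map_apply (show Measurable (p * ·) from (IsometryEquiv.mulLeft p).continuous.measurable)
    measurableSet_closedBall]
  congr 1
  simp

theorem hausdorff_restrict_homogeneous_subgroup_is_haar_general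
    {G : Type*} [Group G] [MetricSpace G] [ProperSpace G]
    [MeasurableSpace G] [BorelSpace G]
    (δ : ℝ → G → G)
    (hδ_one : ∀ lam : ℝ, δ lam (1 : G) = 1)
    (hleft : ∀ g x y : G, dist (g * x) (g * y) = dist x y)
    (hhom : ∀ lam : ℝ, 0 < lam → ∀ x y : G, dist (δ lam x) (δ lam y) = lam * dist x y)
    (P : Subgroup G)
    (d : ℝ) (hd : 0 < d)
    (θ : Measure G) (hθ_null : θ ((P : Set G)ᶜ) = 0)
    (hθ_inv : ∀ p ∈ P, Measure.map (fun x => p * x) θ = θ)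
    (hθ_fin : ∀ K : Set G, IsCompact K → θ K < ⊤)
    (hθ_pos : ∀ U : Set G, IsOpen U → (U ∩ (P : Set G)).Nonempty → 0 < θ U)
    (hθ_scal : ∀ lam : ℝ, 0 < lam →
      Measure.map (δ lam) θ = ENNReal.ofReal (lam ^ (-d)) • θ)
    (ψ : Measure G)
    (hψ : ψ = μH[d] ∨ ψ = sphericalMeasure G d) :
    ψ.restrict (P : Set G) ≠ 0 ∧
    (∀ p ∈ P, Measure.map (fun x => p * x) (ψ.restrict (P : Set G)) =
      ψ.restrict (P : Set G)) ∧
    (∀ K : Set G, IsCompact K → ψ.restrict (P : Set G) K < ⊤) ∧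
    (∀ U : Set G, IsOpen U → (U ∩ (P : Set G)).Nonempty →
      0 < ψ.restrict (P : Set G) U) := by
  have : IsIsometricSMul G G := ⟨fun g => Isometry.of_dist_eq (hleft g)⟩
  set c := θ (closedBall 1 1)
  have hc : c ≠ 0 := fun h0 => (hθ_pos _ isOpen_ball ⟨1, mem_ball_self one_pos, P.one_mem⟩).ne'
    (measure_mono_null ball_subset_closedBall h0)
  have hc' : c ≠ ∞ := (hθ_fin _ (isCompact_closedBall 1 1)).ne
  have hunif : θ.IsUniformlyDistributedOn P c d :=
    Measure.isUniformlyDistributedOn_of_map_dilation (fun lam _ => hδ_one lam) hhom hθ_inv hθ_scal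
  obtain ⟨hψ_ge, hψ_le, hψ_inv⟩ : μH[d] ≤ ψ ∧ ψ ≤ (2 : ℝ≥0∞) ^ d • μH[d] ∧
      ∀ e : G ≃ᵢ G, MeasurePreserving e ψ ψ := by
    rcases hψ with rfl | rfl
    · exact ⟨le_rfl, fun _ => le_mul_of_one_le_left' (ENNReal.one_le_rpow one_le_two hd),
        fun e => e.measurePreserving_hausdorffMeasure d⟩
    · exact ⟨hausdorffMeasure_le_sphericalMeasure hd.le,
        sphericalMeasure_le_smul_hausdorffMeasure hd, fun e => e.measurePreserving_sphericalMeasure⟩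
  have hθψ : θ ≤ c • ψ.restrict P :=
    (hunif.le_smul_restrict_hausdorffMeasure hc hc' hd hθ_null).trans <| by gcongr
  have hpos : ∀ U : Set G, IsOpen U → (U ∩ P).Nonempty → 0 < ψ.restrict P U := fun U hU hUP =>
    pos_iff_ne_zero.2 fun h0 => by simpa [h0] using (hθ_pos U hU hUP).trans_le (hθψ U)
  refine ⟨fun h0 => by simpa [h0] using hpos univ isOpen_univ ⟨1, trivial, P.one_mem⟩,
    fun p hp => ?_, fun K hK => ?_, hpos⟩
  · let e := IsometryEquiv.mulLeft p
    have hP : e ⁻¹' P = P := by ext x; simp [e, P.mul_mem_cancel_left hp]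
    have := ((hψ_inv e).restrict_preimage_emb e.toHomeomorph.measurableEmbedding P).map_eq
    rwa [hP] at this
  · calc ψ.restrict P K = ψ (K ∩ P) := Measure.restrict_apply hK.measurableSet
      _ ≤ 2 ^ d * μH[d] (K ∩ P) := hψ_le _
      _ < ∞ := ENNReal.mul_lt_top (by finiteness) <| hunif.hausdorffMeasure_lt_top hc hc' hd
          inter_subset_right (hK.isBounded.subset inter_subset_left)

/-- Let `P` be a homogeneous subgroup, of homogeneous dimension `d` (i.e. a Haar measure
`θ` of `P` satisfies `(δ_λ)_# θ = λ^(-d) θ`), of a Carnot group `G` with homogeneous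
distance.  Then the restriction to `P` of the `d`-dimensional Hausdorff measure `H^d` (or
of the spherical measure `S^d`) is a nonzero, locally finite, left-invariant measure on
`P`, i.e. a Haar measure of `P`. -/
theorem hausdorff_restrict_homogeneous_subgroup_is_haar
    {G : Type*} [Group G] [MetricSpace G] [ProperSpace G]
    [MeasurableSpace G] [BorelSpace G]
    (δ : ℝ → G → G)
    (hδ_one : ∀ lam : ℝ, δ lam (1 : G) = 1)
    (hleft : ∀ g x y : G, dist (g * x) (g * y) = dist x y)
    (hhom : ∀ lam : ℝ, 0 < lam → ∀ x y : G, dist (δ lam x) (δ lam y) = lam * dist x y)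
    (P : Subgroup G) (hPclosed : IsClosed (P : Set G))
    (hPhom : ∀ lam : ℝ, 0 < lam → ∀ x ∈ P, δ lam x ∈ P)
    (d : ℝ) (hd : 0 < d)
    (θ : Measure G) (hθ_ne : θ ≠ 0) (hθ_null : θ ((P : Set G)ᶜ) = 0)
    (hθ_inv : ∀ p ∈ P, Measure.map (fun x => p * x) θ = θ)
    (hθ_fin : ∀ K : Set G, IsCompact K → θ K < ⊤)
    (hθ_pos : ∀ U : Set G, IsOpen U → (U ∩ (P : Set G)).Nonempty → 0 < θ U)
    (hθ_scal : ∀ lam : ℝ, 0 < lam →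
      Measure.map (δ lam) θ = ENNReal.ofReal (lam ^ (-d)) • θ)
    (ψ : Measure G)
    (hψ : ψ = μH[d] ∨ ψ = sphericalMeasure G d) :
    ψ.restrict (P : Set G) ≠ 0 ∧
    (∀ p ∈ P, Measure.map (fun x => p * x) (ψ.restrict (P : Set G)) =
      ψ.restrict (P : Set G)) ∧
    (∀ K : Set G, IsCompact K → ψ.restrict (P : Set G) K < ⊤) ∧
    (∀ U : Set G, IsOpen U → (U ∩ (P : Set G)).Nonempty →
      0 < ψ.restrict (P : Set G) U) :=
  hausdorff_restrict_homogeneous_subgroup_is_haar_general δ hδ_one hleft hhom P d hd θ hθ_null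
    hθ_inv hθ_fin hθ_pos hθ_scal ψ hψ
end
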